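/- Let a₀, a₁, a₂ : ℝ³ → ℝ be C^1 with a₀ and a₁ nowhere zero, satisfying ∂a₁/∂x = ∂a₀/∂y everywhere, and suppose there is a continuous function k : ℝ → ℝ of p alone with (∂a₂/∂y − ∂a₁/∂p)/a₁ = k(p) = (∂a₂/∂x − ∂a₀/∂p)/a₀ everywhere. Then μ(p) = exp(∫_{p₀}^p k(s)ds) is an integrating factor: μ(p)a₂, μ(p)a₁, μ(p)a₀ satisfy the three exactness symmetry conditions. -/

import Mathlib

noncomputable section

/-- Partial derivative w.r.t. the first variable. -/
def pd1 (f : ℝ → ℝ → ℝ → ℝ) (x y p : ℝ) : ℝ := deriv (fun t => f t y p) x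

/-- Partial derivative w.r.t. the second variable. -/
def pd2 (f : ℝ → ℝ → ℝ → ℝ) (x y p : ℝ) : ℝ := deriv (fun t => f x t p) y

/-- Partial derivative w.r.t. the third variable. -/
def pd3 (f : ℝ → ℝ → ℝ → ℝ) (x y p : ℝ) : ℝ := deriv (fun t => f x y t) p

/-- `f : ℝ³ → ℝ` (curried) is continuously differentiable. -/
def C1 (f : ℝ → ℝ → ℝ → ℝ) : Prop :=
  ContDiff ℝ 1 (fun q : ℝ × ℝ × ℝ => f q.1 q.2.1 q.2.2)

/-- The three exactness symmetry conditions for coefficients `a₂, a₁, a₀`. -/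
def ExactConds (a0 a1 a2 : ℝ → ℝ → ℝ → ℝ) : Prop :=
  (∀ x y p, pd2 a2 x y p = pd3 a1 x y p) ∧
  (∀ x y p, pd1 a2 x y p = pd3 a0 x y p) ∧
  (∀ x y p, pd1 a1 x y p = pd2 a0 x y p)

/-! Since `μ(p) = exp (∫ k)` solves `μ' = k μ`, the `x`- and `y`-derivatives of `μ aᵢ` are
`μ ∂aᵢ`, while `∂(μ aᵢ)/∂p = μ (k aᵢ + ∂aᵢ/∂p)`; the hypotheses on `k` say exactly that the
extra term `μ k aᵢ` makes up the defect in each of the two conditions involving `p`. -/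

theorem C1.differentiableAt_slice₃ {f : ℝ → ℝ → ℝ → ℝ} (hf : C1 f) (x y p : ℝ) :
    DifferentiableAt ℝ (fun t => f x y t) p :=
  (hf.differentiable one_ne_zero (x, y, p)).comp (f := fun t => (x, y, t)) p (by fun_prop)

section ScaledCoefficient

variable (μ : ℝ → ℝ) (a : ℝ → ℝ → ℝ → ℝ) (x y p : ℝ)

theorem pd1_mul_left : pd1 (fun x y p => μ p * a x y p) x y p = μ p * pd1 a x y p :=
  deriv_const_mul_field _

theorem pd2_mul_left : pd2 (fun x y p => μ p * a x y p) x y p = μ p * pd2 a x y p :=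
  deriv_const_mul_field _

variable {μ a x y p} in
theorem pd3_mul_left (hμ : DifferentiableAt ℝ μ p) (ha : DifferentiableAt ℝ (fun t => a x y t) p) :
    pd3 (fun x y p => μ p * a x y p) x y p = deriv μ p * a x y p + μ p * pd3 a x y p :=
  deriv_mul hμ ha

end ScaledCoefficient

theorem hasDerivAt_exp_intervalIntegral {k : ℝ → ℝ} (hk : Continuous k) (p₀ p : ℝ) :
    HasDerivAt (fun p => Real.exp (∫ s in p₀..p, k s)) (Real.exp (∫ s in p₀..p, k s) * k p) p :=
  (intervalIntegral.integral_hasDerivAt_right (hk.intervalIntegrable p₀ p)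
    (hk.stronglyMeasurableAtFilter _ _) hk.continuousAt).exp

theorem exactConds_mul_left {a0 a1 a2 : ℝ → ℝ → ℝ → ℝ} {μ k : ℝ → ℝ}
    (hμ : ∀ p, HasDerivAt μ (μ p * k p) p)
    (ha0 : ∀ x y p, DifferentiableAt ℝ (fun t => a0 x y t) p)
    (ha1 : ∀ x y p, DifferentiableAt ℝ (fun t => a1 x y t) p)
    (hsym : ∀ x y p, pd1 a1 x y p = pd2 a0 x y p)
    (hk1 : ∀ x y p, pd2 a2 x y p - pd3 a1 x y p = k p * a1 x y p)
    (hk2 : ∀ x y p, pd1 a2 x y p - pd3 a0 x y p = k p * a0 x y p) :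
    ExactConds (fun x y p => μ p * a0 x y p) (fun x y p => μ p * a1 x y p)
      (fun x y p => μ p * a2 x y p) := by
  refine ⟨fun x y p => ?_, fun x y p => ?_, fun x y p => ?_⟩
  · rw [pd2_mul_left, pd3_mul_left (hμ p).differentiableAt (ha1 x y p), (hμ p).deriv]
    linear_combination μ p * hk1 x y p
  · rw [pd1_mul_left, pd3_mul_left (hμ p).differentiableAt (ha0 x y p), (hμ p).deriv]
    linear_combination μ p * hk2 x y p
  · rw [pd1_mul_left, pd2_mul_left, hsym]

theorem integrating_factor_p_only_general
    (a0 a1 a2 : ℝ → ℝ → ℝ → ℝ)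
    (ha0 : C1 a0) (ha1 : C1 a1)
    (ha0ne : ∀ x y p, a0 x y p ≠ 0) (ha1ne : ∀ x y p, a1 x y p ≠ 0)
    (hsym : ∀ x y p, pd1 a1 x y p = pd2 a0 x y p)
    (k : ℝ → ℝ) (hk : Continuous k)
    (hk1 : ∀ x y p, (pd2 a2 x y p - pd3 a1 x y p) / a1 x y p = k p)
    (hk2 : ∀ x y p, (pd1 a2 x y p - pd3 a0 x y p) / a0 x y p = k p)
    (p0 : ℝ) :
    ExactConds
      (fun x y p => Real.exp (∫ s in p0..p, k s) * a0 x y p)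
      (fun x y p => Real.exp (∫ s in p0..p, k s) * a1 x y p)
      (fun x y p => Real.exp (∫ s in p0..p, k s) * a2 x y p) :=
  exactConds_mul_left (hasDerivAt_exp_intervalIntegral hk p0) ha0.differentiableAt_slice₃
    ha1.differentiableAt_slice₃ hsym
    (fun x y p => (div_eq_iff (ha1ne x y p)).mp (hk1 x y p))
    (fun x y p => (div_eq_iff (ha0ne x y p)).mp (hk2 x y p))

theorem integrating_factor_p_only
    (a0 a1 a2 : ℝ → ℝ → ℝ → ℝ)
    (ha0 : C1 a0) (ha1 : C1 a1) (ha2 : C1 a2)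
    (ha0ne : ∀ x y p, a0 x y p ≠ 0) (ha1ne : ∀ x y p, a1 x y p ≠ 0)
    (hsym : ∀ x y p, pd1 a1 x y p = pd2 a0 x y p)
    (k : ℝ → ℝ) (hk : Continuous k)
    (hk1 : ∀ x y p, (pd2 a2 x y p - pd3 a1 x y p) / a1 x y p = k p)
    (hk2 : ∀ x y p, (pd1 a2 x y p - pd3 a0 x y p) / a0 x y p = k p)
    (p0 : ℝ) :
    ExactConds
      (fun x y p => Real.exp (∫ s in p0..p, k s) * a0 x y p)
      (fun x y p => Real.exp (∫ s in p0..p, k s) * a1 x y p)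
      (fun x y p => Real.exp (∫ s in p0..p, k s) * a2 x y p) :=
  integrating_factor_p_only_general a0 a1 a2 ha0 ha1 ha0ne ha1ne hsym k hk hk1 hk2 p0
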